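/- (From Lemma 4.2.) Let U be a bounded nonnegative entire solution as above, and suppose z belongs to ω(U), the ω-limit set of U in C_0(cl Ω). Then Λ(z) ≤ Λ(U(·, t)) for every t ∈ ℝ; consequently Λ(z) ≤ lim_{t→∞} Λ(U(·, t)). -/

import Mathlib

open Set Filter MeasureTheory Real

noncomputable section

/-- Reflection `P_λ` about the hyperplane `x 0 = lam`. -/
def reflHyp (N : ℕ) [NeZero N] (lam : ℝ) (x : Fin N → ℝ) : Fin N → ℝ :=
  Function.update x 0 (2 * lam - x 0)

/-- The cap `Ω_λ = {x ∈ Ω : x 0 > λ}`. -/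
def capSet {N : ℕ} [NeZero N] (Ω : Set (Fin N → ℝ)) (lam : ℝ) : Set (Fin N → ℝ) :=
  {x ∈ Ω | lam < x 0}

/-- `ℓ = sup {λ : Ω ∩ H_λ ≠ ∅}`, i.e. the supremum of the first coordinate on `Ω`. -/
def ellOf {N : ℕ} [NeZero N] (Ω : Set (Fin N → ℝ)) : ℝ :=
  sSup ((fun x => x 0) '' Ω)

/-- The moving-plane functional
`Λ(z) = inf {λ ∈ (0, ℓ] : V_μ z ≥ 0 on Ω_μ for all μ > λ}`. -/
def bigLambda {N : ℕ} [NeZero N] (Ω : Set (Fin N → ℝ)) (z : (Fin N → ℝ) → ℝ) : ℝ :=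
  sInf {lam | lam ∈ Ioc 0 (ellOf Ω) ∧
    ∀ μ : ℝ, lam < μ → ∀ x ∈ capSet Ω μ, 0 ≤ z (reflHyp N μ x) - z x}

/-- Partial derivative in the `i`-th coordinate direction. -/
def pd {N : ℕ} (i : Fin N) (f : (Fin N → ℝ) → ℝ) (x : Fin N → ℝ) : ℝ :=
  fderiv ℝ f x (Pi.single i 1)

/-- The Laplacian, as the sum of second partial derivatives. -/
def lapl {N : ℕ} (f : (Fin N → ℝ) → ℝ) (x : Fin N → ℝ) : ℝ :=
  ∑ i, pd i (pd i f) x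

/-!
For `μ > 0` put `V_μ u = u ∘ P_μ - u`. The set of `λ` admissible for a profile `u` (`V_μ u ≥ 0`
on `Ω_μ` for all `μ > λ`) can only grow along the flow. Indeed `V_μ U` is continuous on the
closed cap, nonnegative on its boundary (`P_μ` fixes `{x 0 = μ}` and `U` vanishes on `∂Ω`), and
at a spatial minimum in `Ω_μ` the gradients of `U` at `x` and `P_μ x` are mirror images, so by the
symmetries of `g` only the Lipschitz dependence on `u` remains, while `ΔV_μ U ≥ 0`. This gives
`∂ₜ V_μ U ≥ -β0 |V_μ U|` at such points, and a minimum principle propagates `V_μ U(·, t) ≥ 0` to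
all later times. Along `t_n → ∞` the inequality passes to `z`, so every `λ` admissible for
`U(·, t)` is admissible for `z`.
-/

open Topology

section Reflection

variable {N : ℕ} [NeZero N]

def reflHypLin (N : ℕ) [NeZero N] : (Fin N → ℝ) →L[ℝ] (Fin N → ℝ) :=
  ContinuousLinearMap.id ℝ _ - (2 : ℝ) • (ContinuousLinearMap.proj 0).smulRight (Pi.single 0 1)

lemma reflHypLin_apply (v : Fin N → ℝ) : reflHypLin N v = Function.update v 0 (-v 0) := by
  funext i
  rcases eq_or_ne i 0 with rfl | hi
  · simp [reflHypLin]; ring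
  · simp [reflHypLin, hi]

lemma reflHypLin_single (i : Fin N) :
    reflHypLin N (Pi.single i 1) = (if i = 0 then -1 else 1 : ℝ) • Pi.single i 1 := by
  rw [reflHypLin_apply]
  funext j
  rcases eq_or_ne i 0 with rfl | hi
  · rcases eq_or_ne j 0 with rfl | hj <;> simp [*]
  · rcases eq_or_ne j 0 with rfl | hj <;> simp [Pi.single_apply, *]

lemma reflHyp_eq_reflHypLin_add (lam : ℝ) :
    reflHyp N lam = fun x => reflHypLin N x + Pi.single 0 (2 * lam) := by
  funext x i
  rcases eq_or_ne i 0 with rfl | hi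
  · simp [reflHyp, reflHypLin_apply]; ring
  · simp [reflHyp, reflHypLin_apply, hi]

lemma hasFDerivAt_reflHyp (lam : ℝ) (x : Fin N → ℝ) :
    HasFDerivAt (reflHyp N lam) (reflHypLin N) x := by
  rw [reflHyp_eq_reflHypLin_add]
  exact (reflHypLin N).hasFDerivAt.add_const _

lemma contDiff_reflHyp (lam : ℝ) {n : WithTop ℕ∞} : ContDiff ℝ n (reflHyp N lam) := by
  rw [reflHyp_eq_reflHypLin_add]
  exact (reflHypLin N).contDiff.add contDiff_const

lemma continuous_reflHyp (lam : ℝ) : Continuous (reflHyp N lam) :=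
  (contDiff_reflHyp lam (n := 0)).continuous

lemma reflHyp_apply_zero (lam : ℝ) (x : Fin N → ℝ) : reflHyp N lam x 0 = 2 * lam - x 0 := by
  simp [reflHyp]

lemma reflHyp_apply_of_ne (lam : ℝ) (x : Fin N → ℝ) {i : Fin N} (hi : i ≠ 0) :
    reflHyp N lam x i = x i := by
  simp [reflHyp, hi]

lemma reflHyp_eq_self {lam : ℝ} {x : Fin N → ℝ} (hx : x 0 = lam) : reflHyp N lam x = x := by
  funext i
  rcases eq_or_ne i 0 with rfl | hi
  · rw [reflHyp_apply_zero, hx]; ring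
  · exact reflHyp_apply_of_ne lam x hi

end Reflection

section Domain

variable {N : ℕ} [NeZero N] {Ω : Set (Fin N → ℝ)}

/-- `P_μ x` lies on the segment from `x` to its mirror image `P_0 x`, since `0 < μ < x 0`. -/
lemma reflHyp_mem_of_mem_capSet (hΩsym : reflHyp N 0 '' Ω = Ω)
    (hΩconv : ∀ x ∈ Ω, ∀ y ∈ Ω, (∀ i : Fin N, i ≠ 0 → x i = y i) → segment ℝ x y ⊆ Ω)
    {μ : ℝ} (hμ : 0 < μ) {x : Fin N → ℝ} (hx : x ∈ capSet Ω μ) : reflHyp N μ x ∈ Ω := by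
  obtain ⟨hxΩ, hμx⟩ := hx
  have hx0 : 0 < x 0 := hμ.trans hμx
  refine hΩconv x hxΩ _ (hΩsym ▸ mem_image_of_mem _ hxΩ)
    (fun i hi => (reflHyp_apply_of_ne 0 x hi).symm) ⟨μ / x 0, 1 - μ / x 0, by positivity,
      by rw [sub_nonneg, div_le_one hx0]; exact hμx.le, by ring, ?_⟩
  funext i
  rcases eq_or_ne i 0 with rfl | hi
  · simp only [Pi.add_apply, Pi.smul_apply, smul_eq_mul, reflHyp_apply_zero]
    field_simp
    ring
  · simp only [Pi.add_apply, Pi.smul_apply, smul_eq_mul, reflHyp_apply_of_ne _ _ hi]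
    ring

lemma isOpen_capSet (hΩopen : IsOpen Ω) (μ : ℝ) : IsOpen (capSet Ω μ) :=
  hΩopen.inter (isOpen_lt continuous_const (continuous_apply 0))

lemma closure_capSet_subset (μ : ℝ) : closure (capSet Ω μ) ⊆ closure Ω ∩ {x | μ ≤ x 0} :=
  closure_minimal (fun _ hx => ⟨subset_closure hx.1, hx.2.le⟩)
    (isClosed_closure.inter (isClosed_le continuous_const (continuous_apply 0)))

lemma reflHyp_mem_closure_of_mem_closure_capSet (hΩsym : reflHyp N 0 '' Ω = Ω)
    (hΩconv : ∀ x ∈ Ω, ∀ y ∈ Ω, (∀ i : Fin N, i ≠ 0 → x i = y i) → segment ℝ x y ⊆ Ω)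
    {μ : ℝ} (hμ : 0 < μ) {x : Fin N → ℝ} (hx : x ∈ closure (capSet Ω μ)) :
    reflHyp N μ x ∈ closure Ω :=
  map_mem_closure (continuous_reflHyp μ) hx fun _ hy =>
    reflHyp_mem_of_mem_capSet hΩsym hΩconv hμ hy

lemma le_ellOf (hΩbd : Bornology.IsBounded Ω) {x : Fin N → ℝ} (hx : x ∈ Ω) : x 0 ≤ ellOf Ω :=
  le_csSup ((LipschitzWith.eval 0).isBounded_image hΩbd).bddAbove ⟨x, hx, rfl⟩

lemma capSet_eq_empty_of_ellOf_lt (hΩbd : Bornology.IsBounded Ω) {μ : ℝ} (hμ : ellOf Ω < μ) :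
    capSet Ω μ = ∅ :=
  eq_empty_of_forall_notMem fun _ hx => (le_ellOf hΩbd hx.1).not_gt (hμ.trans hx.2)

/-- A point of `Ω` with `0 ≤ x 0` exists by symmetry, and openness pushes it further right. -/
lemma ellOf_pos (hΩbd : Bornology.IsBounded Ω) (hΩopen : IsOpen Ω) (hΩne : Ω.Nonempty)
    (hΩsym : reflHyp N 0 '' Ω = Ω) : 0 < ellOf Ω := by
  obtain ⟨x, hx⟩ := hΩne
  obtain ⟨r, hr, hball⟩ := Metric.isOpen_iff.mp hΩopen x hx
  have hshift : Function.update x 0 (x 0 + r / 2) ∈ Ω := by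
    refine hball (lt_of_le_of_lt ((dist_pi_le_iff (by positivity)).mpr fun i => ?_)
      (half_lt_self hr))
    rcases eq_or_ne i 0 with rfl | hi
    · simp [abs_of_pos hr]
    · simp [hi]; positivity
  have hright := le_ellOf hΩbd hshift
  have hleft := le_ellOf hΩbd (hΩsym ▸ mem_image_of_mem (reflHyp N 0) hx)
  simp only [Function.update_self, reflHyp_apply_zero] at hright hleft
  linarith

end Domain

lemma bigLambda_le_bigLambda {N : ℕ} [NeZero N] {Ω : Set (Fin N → ℝ)}
    (hΩbd : Bornology.IsBounded Ω) (hell : 0 < ellOf Ω) {z w : (Fin N → ℝ) → ℝ}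
    (h : ∀ μ, 0 < μ → (∀ x ∈ capSet Ω μ, 0 ≤ w (reflHyp N μ x) - w x) →
      ∀ x ∈ capSet Ω μ, 0 ≤ z (reflHyp N μ x) - z x) :
    bigLambda Ω z ≤ bigLambda Ω w :=
  csInf_le_csInf ⟨0, fun _ hlam => hlam.1.1.le⟩
    ⟨ellOf Ω, ⟨hell, le_rfl⟩, fun μ hμ x hx => by
      rw [capSet_eq_empty_of_ellOf_lt hΩbd hμ] at hx; exact hx.elim⟩
    fun _ hlam => ⟨hlam.1, fun μ hμ => h μ (hlam.1.1.trans hμ) (hlam.2 μ hμ)⟩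

/-- Were `deriv (deriv f) a < 0`, `a` would also be a local maximum, so `f` would be locally
constant. -/
lemma IsLocalMin.deriv_deriv_nonneg {f : ℝ → ℝ} {a : ℝ} (hmin : IsLocalMin f a)
    (hc : ContinuousAt f a) : 0 ≤ deriv (deriv f) a := by
  by_contra! hneg
  have hmax := isLocalMax_of_deriv_deriv_neg hneg hmin.deriv_eq_zero hc
  have hconst : f =ᶠ[𝓝 a] fun _ => f a := hmin.mp (hmax.mono fun _ h₁ h₂ => le_antisymm h₁ h₂)
  simp [hconst.deriv.deriv_eq] at hneg

lemma HasDerivAt.nonpos_of_isMinOn_Icc {f : ℝ → ℝ} {f' a b : ℝ} (hab : a < b)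
    (hf : HasDerivAt f f' b) (hmin : IsMinOn f (Icc a b) b) : f' ≤ 0 := by
  have hseg : segment ℝ b a ⊆ Icc a b := by rw [segment_symm, segment_eq_Icc hab.le]
  have := hmin.localize.hasFDerivWithinAt_nonneg hf.hasFDerivAt.hasFDerivWithinAt
    (sub_mem_posTangentConeAt_of_segment_subset hseg)
  simp only [ContinuousLinearMap.toSpanSingleton_apply, smul_eq_mul] at this
  nlinarith

section PartialDerivatives

variable {N : ℕ} {f h : (Fin N → ℝ) → ℝ} {x : Fin N → ℝ}

lemma ContDiffAt.eventually_differentiableAt (hf : ContDiffAt ℝ 2 f x) :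
    ∀ᶠ y in 𝓝 x, DifferentiableAt ℝ f y :=
  (hf.eventually (by simp)).mono fun _ hy => hy.differentiableAt (by norm_num)

lemma differentiableAt_pd (hf : ContDiffAt ℝ 2 f x) (i : Fin N) :
    DifferentiableAt ℝ (pd i f) x :=
  ((hf.fderiv_right (m := 1) (by norm_num)).differentiableAt (by norm_num)).clm_apply
    (differentiableAt_const _)

lemma pd_congr (hfh : f =ᶠ[𝓝 x] h) (i : Fin N) : pd i f x = pd i h x := by
  simp only [pd, hfh.fderiv_eq]

lemma pd_sub (hf : DifferentiableAt ℝ f x) (hh : DifferentiableAt ℝ h x) (i : Fin N) :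
    pd i (fun y => f y - h y) x = pd i f x - pd i h x := by
  simp only [pd, fderiv_fun_sub hf hh]
  rfl

lemma pd_const_mul (c : ℝ) (i : Fin N) : pd i (fun y => c * f y) x = c * pd i f x := by
  change fderiv ℝ (c • f) x _ = _
  rw [fderiv_const_smul_field]
  rfl

lemma hasDerivAt_pd_line (i : Fin N) {s : ℝ}
    (hf : DifferentiableAt ℝ f (x + s • Pi.single i 1)) :
    HasDerivAt (fun s : ℝ => f (x + s • Pi.single i 1)) (pd i f (x + s • Pi.single i 1)) s :=
  hf.hasFDerivAt.comp_hasDerivAt s (by simpa using ((hasDerivAt_id s).smul_const _).const_add x)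

lemma pd_pd_nonneg_of_isLocalMin (hf : ContDiffAt ℝ 2 f x) (hmin : IsLocalMin f x)
    (i : Fin N) : 0 ≤ pd i (pd i f) x := by
  set L : ℝ → Fin N → ℝ := fun s => x + s • Pi.single i 1
  have hL0 : L 0 = x := by simp [L]
  have hLc : Continuous L := by fun_prop
  have hL : Tendsto L (𝓝 0) (𝓝 x) := hL0 ▸ hLc.tendsto 0
  have hderiv : deriv (fun s => f (L s)) =ᶠ[𝓝 0] fun s => pd i f (L s) :=
    (hL.eventually hf.eventually_differentiableAt).mono fun _ hs => (hasDerivAt_pd_line i hs).deriv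
  have hderiv2 : HasDerivAt (fun s => pd i f (L s)) (pd i (pd i f) x) 0 := by
    simpa [L] using hasDerivAt_pd_line (s := 0) i (by simpa using differentiableAt_pd hf i)
  have hminL : IsLocalMin (fun s => f (L s)) 0 :=
    IsMinFilter.comp_tendsto (g := L) (hL0 ▸ hmin) hL
  calc 0 ≤ deriv (deriv fun s => f (L s)) 0 :=
        hminL.deriv_deriv_nonneg (hf.continuousAt.comp_of_eq hLc.continuousAt hL0)
    _ = pd i (pd i f) x := by rw [hderiv.deriv_eq, hderiv2.deriv]

lemma lapl_sub (hf : ContDiffAt ℝ 2 f x) (hh : ContDiffAt ℝ 2 h x) :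
    lapl (fun y => f y - h y) x = lapl f x - lapl h x := by
  simp only [lapl, ← Finset.sum_sub_distrib]
  refine Finset.sum_congr rfl fun i _ => ?_
  have hev : pd i (fun y => f y - h y) =ᶠ[𝓝 x] fun y => pd i f y - pd i h y :=
    (hf.eventually_differentiableAt.and hh.eventually_differentiableAt).mono fun _ hy =>
      pd_sub hy.1 hy.2 i
  rw [pd_congr hev, pd_sub (differentiableAt_pd hf i) (differentiableAt_pd hh i)]

lemma lapl_nonneg_of_isLocalMin (hf : ContDiffAt ℝ 2 f x) (hmin : IsLocalMin f x) :
    0 ≤ lapl f x :=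
  Finset.sum_nonneg fun i _ => pd_pd_nonneg_of_isLocalMin hf hmin i

end PartialDerivatives

section ReflectedDerivatives

variable {N : ℕ} [NeZero N] {μ : ℝ} {f : (Fin N → ℝ) → ℝ} {x : Fin N → ℝ}

lemma pd_comp_reflHyp (hf : DifferentiableAt ℝ f (reflHyp N μ x)) (i : Fin N) :
    pd i (fun y => f (reflHyp N μ y)) x = (if i = 0 then -1 else 1) * pd i f (reflHyp N μ x) := by
  change fderiv ℝ (f ∘ reflHyp N μ) x _ = _
  rw [(hf.hasFDerivAt.comp x (hasFDerivAt_reflHyp μ x)).fderiv, ContinuousLinearMap.comp_apply,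
    reflHypLin_single, map_smul, smul_eq_mul, pd]

lemma lapl_comp_reflHyp (hf : ContDiffAt ℝ 2 f (reflHyp N μ x)) :
    lapl (fun y => f (reflHyp N μ y)) x = lapl f (reflHyp N μ x) := by
  refine Finset.sum_congr rfl fun i _ => ?_
  have hev : pd i (fun y => f (reflHyp N μ y)) =ᶠ[𝓝 x]
      fun y => (if i = 0 then -1 else 1) * pd i f (reflHyp N μ y) :=
    ((continuous_reflHyp μ).continuousAt.eventually hf.eventually_differentiableAt).mono
      fun _ hy => pd_comp_reflHyp hy i
  rw [pd_congr hev, pd_const_mul, pd_comp_reflHyp (differentiableAt_pd hf i)]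
  split_ifs <;> ring

lemma pd_reflHyp_of_isLocalMin (hf : DifferentiableAt ℝ f x)
    (hfR : DifferentiableAt ℝ f (reflHyp N μ x))
    (hmin : IsLocalMin (fun y => f (reflHyp N μ y) - f y) x) :
    (fun i => pd i f (reflHyp N μ x)) = Function.update (fun i => pd i f x) 0 (-pd 0 f x) := by
  funext i
  have hcrit : pd i (fun y => f (reflHyp N μ y) - f y) x = 0 := by
    simp [pd, hmin.fderiv_eq_zero]
  have hfR' : DifferentiableAt ℝ (fun y => f (reflHyp N μ y)) x :=
    hfR.comp x (hasFDerivAt_reflHyp μ x).differentiableAt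
  rw [pd_sub hfR' hf, pd_comp_reflHyp hfR] at hcrit
  rcases eq_or_ne i 0 with rfl | hi
  · simp only [if_true, Function.update_self] at hcrit ⊢
    linarith
  · simp only [hi, if_false, one_mul, Function.update_of_ne hi] at hcrit ⊢
    linarith

lemma lapl_le_lapl_reflHyp_of_isLocalMin (hf : ContDiffAt ℝ 2 f x)
    (hfR : ContDiffAt ℝ 2 f (reflHyp N μ x))
    (hmin : IsLocalMin (fun y => f (reflHyp N μ y) - f y) x) :
    lapl f x ≤ lapl f (reflHyp N μ x) := by
  have hfR' : ContDiffAt ℝ 2 (fun y => f (reflHyp N μ y)) x :=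
    hfR.comp x (contDiff_reflHyp μ).contDiffAt
  have := lapl_nonneg_of_isLocalMin (hfR'.sub hf) hmin
  rw [lapl_sub hfR' hf, lapl_comp_reflHyp hfR] at this
  linarith

end ReflectedDerivatives

section MinimumPrinciple

variable {X : Type*} [TopologicalSpace X]

lemma exists_first_zero {K : Set X} (hK : IsCompact K) {W : X → ℝ → ℝ} {t0 T : ℝ}
    (hW : ContinuousOn (fun q : X × ℝ => W q.1 q.2) (K ×ˢ Icc t0 T))
    (hW0 : ∀ x ∈ K, 0 < W x t0) (hneg : ∃ x ∈ K, ∃ t ∈ Icc t0 T, W x t ≤ 0) :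
    ∃ x ∈ K, ∃ t ∈ Ioc t0 T, W x t = 0 ∧ ∀ y ∈ K, ∀ s ∈ Icc t0 t, 0 ≤ W y s := by
  obtain ⟨x₁, hx₁, t₁, ht₁, hW₁⟩ := hneg
  obtain ⟨F, hFclosed, hF⟩ := continuousOn_iff_isClosed.mp hW _ isClosed_Iic
  set S := (fun q : X × ℝ => W q.1 q.2) ⁻¹' Iic 0 ∩ K ×ˢ Icc t0 T
  have hS : IsCompact S := hF ▸ (hK.prod isCompact_Icc).inter_left hFclosed
  obtain ⟨⟨x, t⟩, ⟨hWxt, hx, htT⟩, hfirst⟩ :=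
    hS.exists_isMinOn ⟨(x₁, t₁), hW₁, hx₁, ht₁⟩ continuous_snd.continuousOn
  have hbefore : ∀ y ∈ K, ∀ s ∈ Ico t0 t, 0 < W y s := fun y hy s hs => by
    by_contra! hWys
    have hts : t ≤ s := hfirst (show (y, s) ∈ S from ⟨hWys, hy, hs.1, hs.2.le.trans htT.2⟩)
    exact hts.not_gt hs.2
  have ht0 : t0 < t := htT.1.lt_of_ne fun h => (hW0 x hx).not_ge (h ▸ hWxt)
  have hupto : ∀ y ∈ K, ∀ s ∈ Icc t0 t, 0 ≤ W y s := by
    intro y hy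
    have hWy : ContinuousOn (W y) (Icc t0 t) :=
      hW.comp (continuousOn_const.prodMk continuousOn_id)
        fun s hs => ⟨hy, hs.1, hs.2.trans htT.2⟩
    have hclosed := hWy.preimage_isClosed_of_isClosed isClosed_Icc (isClosed_Ici (a := 0))
    have hsub : Ico t0 t ⊆ Icc t0 t ∩ W y ⁻¹' Ici 0 :=
      fun s hs => ⟨Ico_subset_Icc_self hs, (hbefore y hy s hs).le⟩
    rw [← closure_Ico ht0.ne]
    exact fun s hs => (closure_minimal hsub hclosed hs).2
  exact ⟨x, hx, t, ⟨ht0, htT.2⟩, le_antisymm hWxt (hupto x hx t ⟨ht0.le, le_rfl⟩), hupto⟩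

variable {C : Set X} {t0 T : ℝ}

/-- At a first zero in the interior, `W (x, ·)` decreases to `0`, contradicting a positive time
derivative. -/
lemma pos_of_hasDerivAt_pos_at_isLocalMin (hC : IsOpen C) (hK : IsCompact (closure C))
    {W : X → ℝ → ℝ} (hW : ContinuousOn (fun q : X × ℝ => W q.1 q.2) (closure C ×ˢ Icc t0 T))
    (hW0 : ∀ x ∈ closure C, 0 < W x t0)
    (hWbdry : ∀ x ∈ closure C \ C, ∀ t ∈ Icc t0 T, 0 < W x t)
    (hWmin : ∀ x ∈ C, ∀ t ∈ Ioc t0 T, W x t = 0 → IsLocalMin (fun y => W y t) x →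
      ∃ W', HasDerivAt (W x) W' t ∧ 0 < W') :
    ∀ x ∈ closure C, ∀ t ∈ Icc t0 T, 0 < W x t := by
  by_contra! hneg
  obtain ⟨x, hx, t, ht, hWxt, hupto⟩ := exists_first_zero hK hW hW0 hneg
  have hxC : x ∈ C := by
    by_contra hxC
    exact (hWbdry x ⟨hx, hxC⟩ t (Ioc_subset_Icc_self ht)).ne' hWxt
  have hmin : IsLocalMin (fun y => W y t) x :=
    Filter.mem_of_superset (hC.mem_nhds hxC) fun y hy => by
      simpa [hWxt] using hupto y (subset_closure hy) t ⟨ht.1.le, le_rfl⟩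
  obtain ⟨W', hW', hW'pos⟩ := hWmin x hxC t ht hWxt hmin
  exact hW'pos.not_ge <| hW'.nonpos_of_isMinOn_Icc ht.1 fun s hs => by
    simpa [hWxt] using hupto x hx s hs

/-- Apply the strict principle to `V + ε e^{(β + 1)(t - t0)}` and let `ε → 0`. -/
lemma nonneg_of_deriv_ge_at_isLocalMin (hC : IsOpen C) (hK : IsCompact (closure C))
    {V : X → ℝ → ℝ} {β : ℝ}
    (hV : ContinuousOn (fun q : X × ℝ => V q.1 q.2) (closure C ×ˢ Icc t0 T))
    (hV0 : ∀ x ∈ closure C, 0 ≤ V x t0)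
    (hVbdry : ∀ x ∈ closure C \ C, ∀ t ∈ Icc t0 T, 0 ≤ V x t)
    (hVdiff : ∀ x ∈ C, ∀ t ∈ Ioc t0 T, DifferentiableAt ℝ (V x) t)
    (hVmin : ∀ x ∈ C, ∀ t ∈ Ioc t0 T, IsLocalMin (fun y => V y t) x →
      -(β * |V x t|) ≤ deriv (V x) t) :
    ∀ x ∈ C, ∀ t ∈ Icc t0 T, 0 ≤ V x t := by
  set e : ℝ → ℝ := fun t => exp ((β + 1) * (t - t0))
  have hpos : ∀ ε > 0, ∀ x ∈ closure C, ∀ t ∈ Icc t0 T, 0 < V x t + ε * e t := by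
    intro ε hε
    refine pos_of_hasDerivAt_pos_at_isLocalMin hC hK (hV.add (by fun_prop))
      (fun x hx => by simpa [e] using add_pos_of_nonneg_of_pos (hV0 x hx) hε)
      (fun x hx t ht => add_pos_of_nonneg_of_pos (hVbdry x hx t ht) (by positivity)) ?_
    intro x hx t ht hzero hmin
    have he : HasDerivAt e ((β + 1) * e t) t := by
      simpa [e, mul_comm] using ((hasDerivAt_id t).sub_const t0).const_mul (β + 1) |>.exp
    have hVxt : V x t = -(ε * e t) := by linarith
    have hder := hVmin x hx t ht (by simpa using hmin.add (isLocalMin_const (b := -(ε * e t))))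
    rw [hVxt, abs_neg, abs_of_pos (by positivity)] at hder
    refine ⟨_, (hVdiff x hx t ht).hasDerivAt.add (he.const_mul ε), ?_⟩
    nlinarith [show 0 < ε * e t by positivity]
  intro x hx t ht
  refine le_of_forall_pos_lt_add fun δ hδ => ?_
  simpa [div_mul_cancel₀ δ (show e t ≠ 0 from (exp_pos _).ne')] using
    hpos (δ / e t) (by positivity) x (subset_closure hx) t ht

end MinimumPrinciple

section MovingPlane

variable {N : ℕ} [NeZero N] {Ω : Set (Fin N → ℝ)}

lemma comp_reflHyp_sub_nonneg_of_mem_closure_capSet_diff (hΩopen : IsOpen Ω)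
    (hΩsym : reflHyp N 0 '' Ω = Ω)
    (hΩconv : ∀ x ∈ Ω, ∀ y ∈ Ω, (∀ i : Fin N, i ≠ 0 → x i = y i) → segment ℝ x y ⊆ Ω)
    {u : (Fin N → ℝ) → ℝ} (hu : ∀ x ∈ closure Ω, 0 ≤ u x) (hubc : ∀ x ∈ frontier Ω, u x = 0)
    {μ : ℝ} (hμ : 0 < μ) {x : Fin N → ℝ} (hx : x ∈ closure (capSet Ω μ) \ capSet Ω μ) :
    0 ≤ u (reflHyp N μ x) - u x := by
  obtain ⟨hxcl, hxC⟩ := hx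
  by_cases hxΩ : x ∈ Ω
  · have hx0 : x 0 = μ :=
      le_antisymm (not_lt.mp fun h => hxC ⟨hxΩ, h⟩) (closure_capSet_subset μ hxcl).2
    rw [reflHyp_eq_self hx0, sub_self]
  · have hxfr : x ∈ frontier Ω := by
      rw [hΩopen.frontier_eq]
      exact ⟨(closure_capSet_subset μ hxcl).1, hxΩ⟩
    rw [hubc x hxfr, sub_zero]
    exact hu _ (reflHyp_mem_closure_of_mem_closure_capSet hΩsym hΩconv hμ hxcl)

variable {β0 : ℝ} {g : ℝ → (Fin N → ℝ) → ℝ → (Fin N → ℝ) → ℝ} {U : (Fin N → ℝ) → ℝ → ℝ}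

/-- At a spatial minimum of `V = U ∘ P_μ - U` the gradients of `U` at `x` and `P_μ x` are mirror
images, so the `g`-terms differ only through `U`, and the Laplacian of `V` is nonnegative. -/
lemma deriv_comp_reflHyp_sub_ge_of_isLocalMin
    (hgsym : ∀ t x y u p, (∀ i : Fin N, i ≠ 0 → x i = y i) → g t x u p = g t y u p)
    (hgeven : ∀ t x u (p : Fin N → ℝ), g t x u (Function.update p 0 (-(p 0))) = g t x u p)
    (hglip : ∀ t x u u' p p', |g t x u p - g t x u' p'| ≤ β0 * (|u - u'| + ‖p - p'‖))
    (hUregt : ∀ x ∈ Ω, ∀ t : ℝ, DifferentiableAt ℝ (fun s => U x s) t)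
    (hUregx : ∀ t : ℝ, ∀ x ∈ Ω, ContDiffAt ℝ 2 (fun y => U y t) x)
    (hUpde : ∀ x ∈ Ω, ∀ t : ℝ,
      deriv (fun s => U x s) t
        = lapl (fun y => U y t) x + g t x (U x t) (fun i => pd i (fun y => U y t) x))
    {μ t : ℝ} {x : Fin N → ℝ} (hx : x ∈ Ω) (hRx : reflHyp N μ x ∈ Ω)
    (hmin : IsLocalMin (fun y => U (reflHyp N μ y) t - U y t) x) :
    -(β0 * |U (reflHyp N μ x) t - U x t|) ≤ deriv (fun s => U (reflHyp N μ x) s - U x s) t := by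
  have hgrad := pd_reflHyp_of_isLocalMin ((hUregx t x hx).differentiableAt (by norm_num))
    ((hUregx t _ hRx).differentiableAt (by norm_num)) hmin
  have hlapl := lapl_le_lapl_reflHyp_of_isLocalMin (hUregx t x hx) (hUregx t _ hRx) hmin
  have hg : g t (reflHyp N μ x) (U (reflHyp N μ x) t)
        (fun i => pd i (fun y => U y t) (reflHyp N μ x))
      = g t x (U (reflHyp N μ x) t) (fun i => pd i (fun y => U y t) x) := by
    rw [hgsym t _ x _ _ fun i hi => reflHyp_apply_of_ne μ x hi, hgrad, hgeven]
  have hlip := hglip t x (U (reflHyp N μ x) t) (U x t)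
    (fun i => pd i (fun y => U y t) x) (fun i => pd i (fun y => U y t) x)
  rw [sub_self, norm_zero, add_zero] at hlip
  rw [deriv_fun_sub (hUregt _ hRx t) (hUregt x hx t), hUpde _ hRx t, hUpde x hx t, hg]
  linarith [(abs_le.mp hlip).1]

lemma comp_reflHyp_sub_nonneg_of_nonneg_initial (hΩbd : Bornology.IsBounded Ω) (hΩopen : IsOpen Ω)
    (hΩsym : reflHyp N 0 '' Ω = Ω)
    (hΩconv : ∀ x ∈ Ω, ∀ y ∈ Ω, (∀ i : Fin N, i ≠ 0 → x i = y i) → segment ℝ x y ⊆ Ω)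
    (hgsym : ∀ t x y u p, (∀ i : Fin N, i ≠ 0 → x i = y i) → g t x u p = g t y u p)
    (hgeven : ∀ t x u (p : Fin N → ℝ), g t x u (Function.update p 0 (-(p 0))) = g t x u p)
    (hglip : ∀ t x u u' p p', |g t x u p - g t x u' p'| ≤ β0 * (|u - u'| + ‖p - p'‖))
    (hUpos : ∀ x ∈ closure Ω, ∀ t : ℝ, 0 ≤ U x t)
    (hUcont : ContinuousOn (fun q : (Fin N → ℝ) × ℝ => U q.1 q.2) (closure Ω ×ˢ univ))
    (hUbc : ∀ x ∈ frontier Ω, ∀ t : ℝ, U x t = 0)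
    (hUregt : ∀ x ∈ Ω, ∀ t : ℝ, DifferentiableAt ℝ (fun s => U x s) t)
    (hUregx : ∀ t : ℝ, ∀ x ∈ Ω, ContDiffAt ℝ 2 (fun y => U y t) x)
    (hUpde : ∀ x ∈ Ω, ∀ t : ℝ,
      deriv (fun s => U x s) t
        = lapl (fun y => U y t) x + g t x (U x t) (fun i => pd i (fun y => U y t) x))
    {μ t0 t : ℝ} (hμ : 0 < μ) (ht : t0 ≤ t)
    (h0 : ∀ x ∈ capSet Ω μ, 0 ≤ U (reflHyp N μ x) t0 - U x t0) :
    ∀ x ∈ capSet Ω μ, 0 ≤ U (reflHyp N μ x) t - U x t := by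
  have hRcl : ∀ x ∈ closure (capSet Ω μ), reflHyp N μ x ∈ closure Ω :=
    fun _ hx => reflHyp_mem_closure_of_mem_closure_capSet hΩsym hΩconv hμ hx
  have hbdry : ∀ x ∈ closure (capSet Ω μ) \ capSet Ω μ, ∀ s : ℝ,
      0 ≤ U (reflHyp N μ x) s - U x s := fun x hx s =>
    comp_reflHyp_sub_nonneg_of_mem_closure_capSet_diff hΩopen hΩsym hΩconv
      (fun y hy => hUpos y hy s) (fun y hy => hUbc y hy s) hμ hx
  have hcont : ContinuousOn (fun q : (Fin N → ℝ) × ℝ => U (reflHyp N μ q.1) q.2 - U q.1 q.2)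
      (closure (capSet Ω μ) ×ˢ Icc t0 t) := by
    refine ContinuousOn.sub (hUcont.comp (f := fun q : (Fin N → ℝ) × ℝ => (reflHyp N μ q.1, q.2))
      (((continuous_reflHyp μ).comp continuous_fst).prodMk continuous_snd).continuousOn
      fun _ hq => ⟨hRcl _ hq.1, trivial⟩) ?_
    exact hUcont.mono (prod_mono (closure_mono fun _ hx => hx.1) (subset_univ _))
  intro x hx
  refine nonneg_of_deriv_ge_at_isLocalMin (isOpen_capSet hΩopen μ)
    (hΩbd.subset fun _ hx => hx.1).isCompact_closure hcont
    (fun x hx => (em (x ∈ capSet Ω μ)).elim (h0 x) fun hxC => hbdry x ⟨hx, hxC⟩ t0)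
    (fun x hx s _ => hbdry x hx s)
    (fun x hx s _ => (hUregt _ (reflHyp_mem_of_mem_capSet hΩsym hΩconv hμ hx) s).sub
      (hUregt x hx.1 s))
    (fun x hx s _ hmin => deriv_comp_reflHyp_sub_ge_of_isLocalMin hgsym hgeven hglip hUregt
      hUregx hUpde hx.1 (reflHyp_mem_of_mem_capSet hΩsym hΩconv hμ hx) hmin) x hx t ⟨ht, le_rfl⟩

end MovingPlane

theorem bigLambda_le_on_omega_limit_general (N : ℕ) [NeZero N] (Ω : Set (Fin N → ℝ))
    (hΩbd : Bornology.IsBounded Ω) (hΩopen : IsOpen Ω) (hΩconn : IsConnected Ω)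
    (hΩsym : reflHyp N 0 '' Ω = Ω)
    (hΩconv : ∀ x ∈ Ω, ∀ y ∈ Ω, (∀ i : Fin N, i ≠ 0 → x i = y i) → segment ℝ x y ⊆ Ω)
    (β0 : ℝ)
    (g : ℝ → (Fin N → ℝ) → ℝ → (Fin N → ℝ) → ℝ)
    (hgsym : ∀ t x y u p, (∀ i : Fin N, i ≠ 0 → x i = y i) → g t x u p = g t y u p)
    (hgeven : ∀ t x u (p : Fin N → ℝ), g t x u (Function.update p 0 (-(p 0))) = g t x u p)
    (hglip : ∀ t x u u' p p', |g t x u p - g t x u' p'| ≤ β0 * (|u - u'| + ‖p - p'‖))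
    (U : (Fin N → ℝ) → ℝ → ℝ)
    (hUpos : ∀ x ∈ closure Ω, ∀ t : ℝ, 0 ≤ U x t)
    (hUcont : ContinuousOn (fun q : (Fin N → ℝ) × ℝ => U q.1 q.2) (closure Ω ×ˢ univ))
    (hUbc : ∀ x ∈ frontier Ω, ∀ t : ℝ, U x t = 0)
    (hUregt : ∀ x ∈ Ω, ∀ t : ℝ, DifferentiableAt ℝ (fun s => U x s) t)
    (hUregx : ∀ t : ℝ, ∀ x ∈ Ω, ContDiffAt ℝ 2 (fun y => U y t) x)
    (hUpde : ∀ x ∈ Ω, ∀ t : ℝ,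
      deriv (fun s => U x s) t
        = lapl (fun y => U y t) x + g t x (U x t) (fun i => pd i (fun y => U y t) x))
    (z : (Fin N → ℝ) → ℝ)
    (hz : ∃ tn : ℕ → ℝ, Tendsto tn atTop atTop ∧
      TendstoUniformlyOn (fun n x => U x (tn n)) z atTop (closure Ω)) :
    ∀ t : ℝ, bigLambda Ω z ≤ bigLambda Ω (fun x => U x t) := by
  obtain ⟨tn, htn, hzU⟩ := hz
  intro t
  refine bigLambda_le_bigLambda hΩbd (ellOf_pos hΩbd hΩopen hΩconn.nonempty hΩsym)
    fun μ hμ ht x hx => ?_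
  have hlater : ∀ᶠ n in atTop, 0 ≤ U (reflHyp N μ x) (tn n) - U x (tn n) := by
    filter_upwards [htn.eventually_ge_atTop t] with n hn
    exact comp_reflHyp_sub_nonneg_of_nonneg_initial hΩbd hΩopen hΩsym hΩconv hgsym hgeven hglip
      hUpos hUcont hUbc hUregt hUregx hUpde hμ hn ht x hx
  have hRx := subset_closure (reflHyp_mem_of_mem_capSet hΩsym hΩconv hμ hx)
  exact ge_of_tendsto ((hzU.tendsto_at hRx).sub (hzU.tendsto_at (subset_closure hx.1))) hlater

/-- From Lemma 4.2: if `z` belongs to the ω-limit set of a bounded nonnegative entire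
solution `U` (in the uniform topology on the closure of `Ω`), then `Λ(z) ≤ Λ(U(·, t))`
for every `t`, hence `Λ(z)` is at most the limit of `Λ(U(·, t))` as `t → ∞`. -/
theorem bigLambda_le_on_omega_limit (N : ℕ) [NeZero N] (Ω : Set (Fin N → ℝ))
    (hΩbd : Bornology.IsBounded Ω) (hΩopen : IsOpen Ω) (hΩconn : IsConnected Ω)
    (hΩsym : reflHyp N 0 '' Ω = Ω)
    (hΩconv : ∀ x ∈ Ω, ∀ y ∈ Ω, (∀ i : Fin N, i ≠ 0 → x i = y i) → segment ℝ x y ⊆ Ω)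
    -- condition (A): exterior measure-density condition at the boundary
    (hΩA : ∃ ς ∈ Ioo (0:ℝ) 1, ∃ R : ℝ, 0 < R ∧ ∀ x ∈ frontier Ω, ∀ ρ ∈ Ioo (0:ℝ) R,
      volume (Ω ∩ Metric.ball x ρ) ≤ ENNReal.ofReal ς * volume (Metric.ball x ρ))
    (β0 : ℝ) (hβ0 : 0 < β0)
    (g : ℝ → (Fin N → ℝ) → ℝ → (Fin N → ℝ) → ℝ)
    (hgsym : ∀ t x y u p, (∀ i : Fin N, i ≠ 0 → x i = y i) → g t x u p = g t y u p)
    (hgeven : ∀ t x u (p : Fin N → ℝ), g t x u (Function.update p 0 (-(p 0))) = g t x u p)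
    (hglip : ∀ t x u u' p p', |g t x u p - g t x u' p'| ≤ β0 * (|u - u'| + ‖p - p'‖))
    (U : (Fin N → ℝ) → ℝ → ℝ)
    (hUbd : ∃ M : ℝ, ∀ x t, |U x t| ≤ M)
    (hUpos : ∀ x ∈ closure Ω, ∀ t : ℝ, 0 ≤ U x t)
    (hUcont : ContinuousOn (fun q : (Fin N → ℝ) × ℝ => U q.1 q.2) (closure Ω ×ˢ univ))
    (hUbc : ∀ x ∈ frontier Ω, ∀ t : ℝ, U x t = 0)
    (hUregt : ∀ x ∈ Ω, ∀ t : ℝ, DifferentiableAt ℝ (fun s => U x s) t)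
    (hUregx : ∀ t : ℝ, ∀ x ∈ Ω, ContDiffAt ℝ 2 (fun y => U y t) x)
    (hUpde : ∀ x ∈ Ω, ∀ t : ℝ,
      deriv (fun s => U x s) t
        = lapl (fun y => U y t) x + g t x (U x t) (fun i => pd i (fun y => U y t) x))
    (z : (Fin N → ℝ) → ℝ)
    (hz : ∃ tn : ℕ → ℝ, Tendsto tn atTop atTop ∧
      TendstoUniformlyOn (fun n x => U x (tn n)) z atTop (closure Ω)) :
    ∀ t : ℝ, bigLambda Ω z ≤ bigLambda Ω (fun x => U x t) :=
  bigLambda_le_on_omega_limit_general N Ω hΩbd hΩopen hΩconn hΩsym hΩconv β0 g hgsym hgeven hglip U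
    hUpos hUcont hUbc hUregt hUregx hUpde z hz
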